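/- (Lemma 3) For any real γ, positive integer j₀, and Y > 2, |S(Y,1,γ)| + |S(Y,2,γ)| ≪ (log Y) ∑_{j=1}^{j₀} |∑_{1 ≤ n ≤ Y·2^{-j}} e(2^j γ n)| + Y·2^{-j₀} + log Y, with an absolute implied constant. -/

import Mathlib

open Complex Finset

/-- `e(x) = exp(2πix)`. -/
noncomputable def e (x : ℝ) : ℂ := Complex.exp (2 * Real.pi * Complex.I * x)

/-- `ε(n) = (-1)^(s₂ n)` where `s₂` is the binary digit sum. -/
def eps (n : ℕ) : ℤ := (-1) ^ ((Nat.digits 2 n).sum)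

/-- `S(Y,h,β) = ∑_{1 ≤ n ≤ Y} ε(n) ε(n+h) e(βn)`. -/
noncomputable def S (Y : ℝ) (h : ℕ) (β : ℝ) : ℂ :=
  ∑ n ∈ Finset.Icc 1 ⌊Y⌋₊, (eps n : ℂ) * (eps (n + h) : ℂ) * e (β * n)

/-!
Splitting `n` by parity and using `ε(2m) = ε(m)`, `ε(2m+1) = -ε(m)` gives the exact identities
`S₀(2M,1,β) = -∑_{m<M} e(2βm) - e(β) S₀(M,1,2β)` and `S₀(2M,2,β) = (1 + e(β)) S₀(M,1,2β)`.
Iterating the first `J` times bounds `|S(Y,1,γ)|` by the exponential sums at the scales `2^j`,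
`j ≤ J`, plus `Y 2^{-J} + J`; the second reduces `h = 2` to `h = 1` at the cost of one more
exponential sum. Taking `J = min(j₀, ⌊log₂ Y⌋ + 1)` keeps `J ≪ log Y`, and when `J < j₀` the
trivial bound `⌊Y 2^{-J}⌋` on the remaining sum vanishes.
-/

lemma e_add (x y : ℝ) : e (x + y) = e x * e y := by
  simp only [e, ← Complex.exp_add]
  push_cast
  ring_nf

lemma norm_e (x : ℝ) : ‖e x‖ = 1 := by
  rw [e, show 2 * Real.pi * I * x = ((2 * Real.pi * x : ℝ) : ℂ) * I by push_cast; ring]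
  exact norm_exp_ofReal_mul_I _

lemma eps_two_mul (m : ℕ) : eps (2 * m) = eps m := by
  rcases m.eq_zero_or_pos with rfl | hm
  · rfl
  · rw [eps, Nat.digits_def' one_lt_two (by omega)]
    simp [eps]

lemma eps_two_mul_add_one (m : ℕ) : eps (2 * m + 1) = -eps m := by
  rw [eps, Nat.digits_def' one_lt_two (by omega)]
  simp [eps, Nat.mul_add_div, pow_add]

lemma eps_mul_self (n : ℕ) : eps n * eps n = 1 := by
  simp [eps, ← pow_add, ← two_mul, pow_mul]

lemma norm_eps (n : ℕ) : ‖(eps n : ℂ)‖ = 1 := by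
  simp [eps]

lemma sum_range_two_mul {M : Type*} [AddCommMonoid M] (f : ℕ → M) (n : ℕ) :
    ∑ i ∈ range (2 * n), f i = ∑ i ∈ range n, (f (2 * i) + f (2 * i + 1)) := by
  induction n with
  | zero => simp
  | succ n ih => rw [mul_add_one, sum_range_succ, sum_range_succ, sum_range_succ, ih, add_assoc]

lemma sum_Icc_one_eq_sum_range_succ {M : Type*} [AddCommMonoid M] (f : ℕ → M) (n : ℕ) :
    ∑ i ∈ Icc 1 n, f i = ∑ i ∈ range n, f (i + 1) := by
  rw [range_eq_Ico, sum_Ico_add', zero_add, Ico_add_one_right_eq_Icc]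

noncomputable def expSum (M : ℕ) (θ : ℝ) : ℂ := ∑ n ∈ Icc 1 M, e (θ * n)

lemma norm_sum_range_e_eq_norm_expSum (M : ℕ) (θ : ℝ) :
    ‖∑ m ∈ range M, e (θ * m)‖ = ‖expSum M θ‖ := by
  have : expSum M θ = e θ * ∑ m ∈ range M, e (θ * m) := by
    rw [expSum, sum_Icc_one_eq_sum_range_succ, mul_sum]
    refine sum_congr rfl fun m _ => ?_
    rw [← e_add]
    push_cast
    ring_nf
  rw [this, norm_mul, norm_e, one_mul]

/-- `S₀ N h β` is `S` summed over `0 ≤ n < N`, the range that halves exactly into even and odd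
`n`. -/
noncomputable def S₀ (N h : ℕ) (β : ℝ) : ℂ :=
  ∑ n ∈ range N, (eps n : ℂ) * (eps (n + h) : ℂ) * e (β * n)

lemma norm_eps_mul_eps_mul_e (m n : ℕ) (x : ℝ) : ‖(eps m : ℂ) * (eps n : ℂ) * e x‖ = 1 := by
  rw [norm_mul, norm_mul, norm_eps, norm_eps, norm_e, one_mul, one_mul]

lemma norm_S₀_le (N h : ℕ) (β : ℝ) : ‖S₀ N h β‖ ≤ N := by
  simpa [S₀] using
    norm_sum_le_of_le (range N) fun n _ => (norm_eps_mul_eps_mul_e n (n + h) (β * n)).le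

lemma norm_S₀_sub_S₀_two_mul_div_two_le (N h : ℕ) (β : ℝ) :
    ‖S₀ N h β - S₀ (2 * (N / 2)) h β‖ ≤ 1 := by
  rcases Nat.even_or_odd' N with ⟨M, rfl | rfl⟩
  · simp
  · rw [show (2 * M + 1) / 2 = M by omega, S₀, sum_range_succ, ← S₀, add_sub_cancel_left]
    exact (norm_eps_mul_eps_mul_e _ _ _).le

lemma norm_S_le_norm_S₀ (Y : ℝ) (h : ℕ) (β : ℝ) : ‖S Y h β‖ ≤ ‖S₀ ⌊Y⌋₊ h β‖ + 2 := by
  set f : ℕ → ℂ := fun n => (eps n : ℂ) * (eps (n + h) : ℂ) * e (β * n)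
  have hS : S Y h β = S₀ ⌊Y⌋₊ h β + f ⌊Y⌋₊ - f 0 := by
    rw [S, S₀, sum_Icc_one_eq_sum_range_succ, ← sum_range_succ, sum_range_succ']
    ring
  calc ‖S Y h β‖ ≤ ‖S₀ ⌊Y⌋₊ h β‖ + ‖f ⌊Y⌋₊‖ + ‖f 0‖ := by
        rw [hS]; exact (norm_sub_le _ _).trans (by gcongr; exact norm_add_le _ _)
    _ = ‖S₀ ⌊Y⌋₊ h β‖ + 2 := by
        simp only [f, norm_eps_mul_eps_mul_e]; ring

lemma S₀_one_two_mul (M : ℕ) (β : ℝ) :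
    S₀ (2 * M) 1 β = -∑ m ∈ range M, e (2 * β * m) - e β * S₀ M 1 (2 * β) := by
  rw [S₀, sum_range_two_mul, S₀, mul_sum, ← sum_neg_distrib, ← sum_sub_distrib]
  refine sum_congr rfl fun m _ => ?_
  have hm : (eps m : ℂ) * eps m = 1 := by exact_mod_cast eps_mul_self m
  rw [show 2 * m + 1 + 1 = 2 * (m + 1) by ring, eps_two_mul, eps_two_mul, eps_two_mul_add_one,
    show β * ((2 * m + 1 : ℕ) : ℝ) = β + 2 * β * m by push_cast; ring, e_add,
    show β * ((2 * m : ℕ) : ℝ) = 2 * β * m by push_cast; ring]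
  push_cast
  linear_combination (-e (2 * β * m)) * hm

lemma S₀_two_two_mul (M : ℕ) (β : ℝ) : S₀ (2 * M) 2 β = (1 + e β) * S₀ M 1 (2 * β) := by
  rw [S₀, sum_range_two_mul, S₀, add_mul, one_mul, mul_sum, ← sum_add_distrib]
  refine sum_congr rfl fun m _ => ?_
  rw [show 2 * m + 2 = 2 * (m + 1) by ring, show 2 * m + 1 + 2 = 2 * (m + 1) + 1 by ring,
    eps_two_mul, eps_two_mul, eps_two_mul_add_one, eps_two_mul_add_one,
    show β * ((2 * m + 1 : ℕ) : ℝ) = β + 2 * β * m by push_cast; ring, e_add,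
    show β * ((2 * m : ℕ) : ℝ) = 2 * β * m by push_cast; ring]
  push_cast
  ring

lemma norm_S₀_one_le (N : ℕ) (β : ℝ) :
    ‖S₀ N 1 β‖ ≤ ‖expSum (N / 2) (2 * β)‖ + ‖S₀ (N / 2) 1 (2 * β)‖ + 1 := by
  have hsplit := norm_S₀_sub_S₀_two_mul_div_two_le N 1 β
  have heven : ‖S₀ (2 * (N / 2)) 1 β‖ ≤ ‖expSum (N / 2) (2 * β)‖ + ‖S₀ (N / 2) 1 (2 * β)‖ := by
    rw [S₀_one_two_mul, ← norm_sum_range_e_eq_norm_expSum, ← norm_neg (∑ m ∈ range _, _)]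
    refine (norm_sub_le _ _).trans_eq ?_
    rw [norm_mul, norm_e, one_mul]
  linarith [norm_le_norm_add_norm_sub' (S₀ N 1 β) (S₀ (2 * (N / 2)) 1 β)]

lemma norm_S₀_two_le (N : ℕ) (β : ℝ) :
    ‖S₀ N 2 β‖ ≤ 2 * ‖S₀ N 1 β‖ + 2 * ‖expSum (N / 2) (2 * β)‖ + 3 := by
  have hsplit₁ := norm_S₀_sub_S₀_two_mul_div_two_le N 1 β
  have hsplit₂ := norm_S₀_sub_S₀_two_mul_div_two_le N 2 β
  have heven₂ : ‖S₀ (2 * (N / 2)) 2 β‖ ≤ 2 * ‖S₀ (N / 2) 1 (2 * β)‖ := by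
    rw [S₀_two_two_mul, norm_mul]
    gcongr
    exact (norm_add_le _ _).trans (by rw [norm_one, norm_e]; norm_num)
  have hhalf : ‖S₀ (N / 2) 1 (2 * β)‖ ≤ ‖expSum (N / 2) (2 * β)‖ + ‖S₀ (2 * (N / 2)) 1 β‖ := by
    have : S₀ (N / 2) 1 (2 * β) * e β =
        -(∑ m ∈ range (N / 2), e (2 * β * m)) - S₀ (2 * (N / 2)) 1 β := by
      rw [S₀_one_two_mul]; ring
    rw [← mul_one ‖S₀ (N / 2) 1 (2 * β)‖, ← norm_e β, ← norm_mul, this,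
      ← norm_sum_range_e_eq_norm_expSum, ← norm_neg (∑ m ∈ range _, _)]
    exact norm_sub_le _ _
  have h₁ := norm_le_norm_add_norm_sub' (S₀ N 2 β) (S₀ (2 * (N / 2)) 2 β)
  have h₂ := norm_le_norm_add_norm_sub (S₀ N 1 β) (S₀ (2 * (N / 2)) 1 β)
  linarith

lemma norm_S₀_one_le_iterate (N : ℕ) (β : ℝ) (J : ℕ) :
    ‖S₀ N 1 β‖ ≤ ∑ j ∈ Icc 1 J, ‖expSum (N / 2 ^ j) (2 ^ j * β)‖ +
      ‖S₀ (N / 2 ^ J) 1 (2 ^ J * β)‖ + J := by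
  induction J with
  | zero => simp
  | succ J ih =>
    have hstep := norm_S₀_one_le (N / 2 ^ J) (2 ^ J * β)
    rw [Nat.div_div_eq_div_mul, ← pow_succ, ← mul_assoc, ← pow_succ'] at hstep
    rw [sum_Icc_succ_top (by omega), Nat.cast_succ]
    linarith

lemma norm_S₀_one_add_norm_S₀_two_le (N : ℕ) (β : ℝ) {J : ℕ} (hJ : 0 < J) :
    ‖S₀ N 1 β‖ + ‖S₀ N 2 β‖ ≤
      5 * ∑ j ∈ Icc 1 J, ‖expSum (N / 2 ^ j) (2 ^ j * β)‖ + 3 * ((N / 2 ^ J : ℕ) : ℝ) +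
        3 * J + 3 := by
  have hiter := norm_S₀_one_le_iterate N β J
  have htail := norm_S₀_le (N / 2 ^ J) 1 (2 ^ J * β)
  have hfirst : ‖expSum (N / 2) (2 * β)‖ ≤ ∑ j ∈ Icc 1 J, ‖expSum (N / 2 ^ j) (2 ^ j * β)‖ := by
    have := single_le_sum (f := fun j => ‖expSum (N / 2 ^ j) (2 ^ j * β)‖)
      (fun _ _ => norm_nonneg _) (mem_Icc.mpr ⟨le_rfl, hJ⟩)
    rwa [pow_one, pow_one] at this
  linarith [norm_S₀_two_le N β]

lemma natLog_two_add_one_le_three_mul_log {N : ℕ} {Y : ℝ} (hY : 2 ≤ Y) (hNY : (N : ℝ) ≤ Y) :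
    (Nat.log 2 N : ℝ) + 1 ≤ 3 * Real.log Y := by
  have hlog2 := Real.log_two_gt_d9
  have hlogY : Real.log 2 ≤ Real.log Y := Real.log_le_log two_pos hY
  have hlogN : (Nat.log 2 N : ℝ) * Real.log 2 ≤ Real.log Y := by
    rcases N.eq_zero_or_pos with rfl | hN
    · simp only [Nat.log_zero_right, CharP.cast_eq_zero, zero_mul]
      linarith
    rw [← Real.log_pow]
    refine Real.log_le_log (by positivity) (le_trans ?_ hNY)
    exact_mod_cast Nat.pow_log_le_self 2 hN.ne'
  nlinarith

lemma natCast_div_two_pow_min_natLog_le {N : ℕ} {Y : ℝ} (hNY : (N : ℝ) ≤ Y) (j : ℕ) :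
    ((N / 2 ^ min j (Nat.log 2 N + 1) : ℕ) : ℝ) ≤ Y / 2 ^ j := by
  rcases le_total j (Nat.log 2 N + 1) with hj | hj
  · rw [min_eq_left hj]
    refine Nat.cast_div_le.trans ?_
    push_cast
    gcongr
  · rw [min_eq_right hj, Nat.div_eq_of_lt (Nat.lt_pow_succ_log_self one_lt_two N), Nat.cast_zero]
    exact div_nonneg (N.cast_nonneg.trans hNY) (by positivity)

theorem lemma_three : ∃ C : ℝ, ∀ (γ : ℝ) (j₀ : ℕ) (Y : ℝ), 0 < j₀ → 2 < Y →
    ‖S Y 1 γ‖ + ‖S Y 2 γ‖ ≤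
      C * (Real.log Y * ∑ j ∈ Finset.Icc 1 j₀,
            ‖∑ n ∈ Finset.Icc 1 ⌊Y / 2 ^ j⌋₊, e (2 ^ j * γ * n)‖ +
          Y / 2 ^ j₀ + Real.log Y) := by
  refine ⟨20, fun γ j₀ Y hj₀ hY => ?_⟩
  set N := ⌊Y⌋₊
  have hNY : (N : ℝ) ≤ Y := Nat.floor_le (by linarith)
  set J := min j₀ (Nat.log 2 N + 1)
  have hsum : ∑ j ∈ Icc 1 J, ‖expSum (N / 2 ^ j) (2 ^ j * γ)‖ ≤
      ∑ j ∈ Icc 1 j₀, ‖∑ n ∈ Icc 1 ⌊Y / 2 ^ j⌋₊, e (2 ^ j * γ * n)‖ := by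
    have hfloor (j : ℕ) : ⌊Y / 2 ^ j⌋₊ = N / 2 ^ j := by
      exact_mod_cast Nat.floor_div_natCast Y (2 ^ j)
    simp only [hfloor]
    exact sum_le_sum_of_subset_of_nonneg (Icc_subset_Icc_right (min_le_left _ _))
      fun _ _ _ => norm_nonneg _
  have hJ : (J : ℝ) ≤ 3 * Real.log Y := by
    have hJN : (J : ℝ) ≤ Nat.log 2 N + 1 := by exact_mod_cast min_le_right _ _
    linarith [natLog_two_add_one_le_three_mul_log hY.le hNY]
  have hlogY : 2 / 3 < Real.log Y :=
    lt_of_lt_of_le (by linarith [Real.log_two_gt_d9]) (Real.log_le_log two_pos hY.le)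
  have hmain := norm_S₀_one_add_norm_S₀_two_le N γ (J := J) (lt_min hj₀ (Nat.succ_pos _))
  have htail := natCast_div_two_pow_min_natLog_le hNY j₀
  have hsum_nonneg : 0 ≤ ∑ j ∈ Icc 1 j₀, ‖∑ n ∈ Icc 1 ⌊Y / 2 ^ j⌋₊, e (2 ^ j * γ * n)‖ :=
    sum_nonneg fun _ _ => norm_nonneg _
  linarith [norm_S_le_norm_S₀ Y 1 γ, norm_S_le_norm_S₀ Y 2 γ,
    mul_le_mul_of_nonneg_right (show 5 ≤ 20 * Real.log Y by linarith) hsum_nonneg]
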